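/- Boundary inequalities for Bayes updates under the absolute-continuity condition (Theorem 5, finite-observation form): Let P be an X×X row-stochastic TP2 matrix, and let B(u), B(u+1) be X×Y row-stochastic TP2 matrices satisfying the boundary condition (A7): for all i, B(u)_{i,1}·B(u+1)_{X,1} ≤ B(u+1)_{i,1}·B(u)_{X,1} and B(u)_{i,Y}·B(u+1)_{X,Y} ≥ B(u+1)_{i,Y}·B(u)_{X,Y}. Let π ∈ Π(X). If σ(π,1,u) > 0 and σ(π,1,u+1) > 0, then the last components of the Bayes updates at the smallest observation satisfy e_XᵀT(π,1,u+1) ≤ e_XᵀT(π,1,u); and if σ(π,Y,u) > 0 and σ(π,Y,u+1) > 0, then at the largest observation e_XᵀT(π,Y,u+1) ≥ e_XᵀT(π,Y,u). -/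

import Mathlib

open Finset

/-- Membership in the belief simplex Π(X). -/
def inSimplex {X : ℕ} (π : Fin X → ℝ) : Prop :=
  (∀ i, 0 ≤ π i) ∧ ∑ i, π i = 1

/-- A matrix is row-stochastic: nonnegative entries, rows summing to one. -/
def rowStochastic {n m : ℕ} (A : Matrix (Fin n) (Fin m) ℝ) : Prop :=
  (∀ i j, 0 ≤ A i j) ∧ ∀ i, ∑ j, A i j = 1

/-- Totally positive of order 2: all 2×2 minors nonnegative. -/
def TP2 {n m : ℕ} (A : Matrix (Fin n) (Fin m) ℝ) : Prop :=
  ∀ i i' : Fin n, ∀ y y' : Fin m, i < i' → y < y' →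
    A i y' * A i' y ≤ A i y * A i' y'

/-- Monotone likelihood ratio (MLR) order: `a ≤_r b`. -/
def MLRle {n : ℕ} (a b : Fin n → ℝ) : Prop :=
  ∀ i j : Fin n, i < j → a j * b i ≤ a i * b j

/-- The last index of `Fin n`. -/
def lastIdx (n : ℕ) [NeZero n] : Fin n :=
  ⟨n - 1, Nat.sub_lt (Nat.pos_of_ne_zero (NeZero.ne n)) Nat.one_pos⟩

/-- One-step predicted belief `Pᵀπ`. -/
noncomputable def bayesPred {X : ℕ} (P : Matrix (Fin X) (Fin X) ℝ) (π : Fin X → ℝ) : Fin X → ℝ :=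
  fun j => ∑ i, P i j * π i

/-- Normalization constant σ(π,y) = Σ_j B_{j,y} (Pᵀπ)_j. -/
noncomputable def obsMarg {X Y : ℕ} (B : Matrix (Fin X) (Fin Y) ℝ)
    (P : Matrix (Fin X) (Fin X) ℝ) (π : Fin X → ℝ) (y : Fin Y) : ℝ :=
  ∑ j, B j y * bayesPred P π j

/-- Bayes belief update T(π,y). -/
noncomputable def bayesT {X Y : ℕ} (B : Matrix (Fin X) (Fin Y) ℝ)
    (P : Matrix (Fin X) (Fin X) ℝ) (π : Fin X → ℝ) (y : Fin Y) : Fin X → ℝ :=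
  fun j => B j y * bayesPred P π j / obsMarg B P π y

/-- Value iteration: `V 0 ≡ 0`, `V (k+1) π = max_u [rᵤᵀπ + ρ Σ_y V k (T(π,y,u)) σ(π,y,u)]`. -/
noncomputable def VI {X Y U : ℕ} [NeZero U]
    (P : Fin U → Matrix (Fin X) (Fin X) ℝ)
    (B : Fin U → Matrix (Fin X) (Fin Y) ℝ)
    (r : Fin U → Fin X → ℝ) (ρ : ℝ) : ℕ → (Fin X → ℝ) → ℝ
  | 0 => fun _ => 0
  | (k+1) => fun π =>
      Finset.univ.sup' Finset.univ_nonempty fun u =>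
        (∑ i, r u i * π i) +
          ρ * ∑ y, VI P B r ρ k (bayesT (B u) (P u) π y) * obsMarg (B u) (P u) π y

/-- `Qfun P B r ρ k π u` is the value-iteration Q-function at horizon `k+1`,
i.e. `Q_{k+1}(π,u) = rᵤᵀπ + ρ Σ_y V_k(T(π,y,u)) σ(π,y,u)`. -/
noncomputable def Qfun {X Y U : ℕ} [NeZero U]
    (P : Fin U → Matrix (Fin X) (Fin X) ℝ)
    (B : Fin U → Matrix (Fin X) (Fin Y) ℝ)
    (r : Fin U → Fin X → ℝ) (ρ : ℝ) (k : ℕ) (π : Fin X → ℝ) (u : Fin U) : ℝ :=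
  (∑ i, r u i * π i) +
    ρ * ∑ y, VI P B r ρ k (bayesT (B u) (P u) π y) * obsMarg (B u) (P u) π y

/-- Lehmann precision of the pair `(A, C)` (i.e. `C >_L A`): for all columns `j, l`,
`g(i) = Σ_{y≤j} A i y − Σ_{y≤l} C i y` changes sign at most once,
from negative to positive, as the row `i` increases. -/
def LehmannPrec {X Y : ℕ} (A C : Matrix (Fin X) (Fin Y) ℝ) : Prop :=
  ∀ j l : Fin Y, ∀ i i' : Fin X, i ≤ i' →
    ((0 ≤ (∑ y ∈ univ.filter (· ≤ j), A i y) - ∑ y ∈ univ.filter (· ≤ l), C i y →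
      0 ≤ (∑ y ∈ univ.filter (· ≤ j), A i' y) - ∑ y ∈ univ.filter (· ≤ l), C i' y) ∧
     (0 < (∑ y ∈ univ.filter (· ≤ j), A i y) - ∑ y ∈ univ.filter (· ≤ l), C i y →
      0 < (∑ y ∈ univ.filter (· ≤ j), A i' y) - ∑ y ∈ univ.filter (· ≤ l), C i' y))

/-- Boundary/absolute-continuity condition (A7) for the pair `(A, C)` (C playing the role of
`B(u+1)`): `A_{i,1} C_{X,1} ≤ C_{i,1} A_{X,1}` and `A_{i,Y} C_{X,Y} ≥ C_{i,Y} A_{X,Y}`. -/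
def BoundaryCond {X Y : ℕ} [NeZero X] [NeZero Y] (A C : Matrix (Fin X) (Fin Y) ℝ) : Prop :=
  ∀ i : Fin X,
    A i 0 * C (lastIdx X) 0 ≤ C i 0 * A (lastIdx X) 0 ∧
    C i (lastIdx Y) * A (lastIdx X) (lastIdx Y) ≤ A i (lastIdx Y) * C (lastIdx X) (lastIdx Y)

/-- Copositive dominance `P1 ⪯ P2`. -/
def CopositiveDom {X : ℕ} (P1 P2 : Matrix (Fin X) (Fin X) ℝ) : Prop :=
  ∀ j j' : Fin X, j'.val = j.val + 1 → ∀ π : Fin X → ℝ, inSimplex π →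
    0 ≤ ∑ m, ∑ n, π m *
      ((1/2) * ((P1 m j * P2 n j' - P1 m j' * P2 n j) +
                (P1 n j * P2 m j' - P1 n j' * P2 m j))) * π n

/-- `u` is the largest maximizer of `f` over the action set. -/
def isLargestArgmax {U : ℕ} (f : Fin U → ℝ) (u : Fin U) : Prop :=
  (∀ v, f v ≤ f u) ∧ ∀ v, f u ≤ f v → v ≤ u

/-! The last coordinate of `T(π,y,a)` is `B(a)_{X,y} (Pᵀπ)_X / σ(π,y,a)`. After cross-multiplying,
each inequality compares two sums over the states `j` whose terms are ordered one by one, and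
that termwise comparison is exactly condition (A7), since `Pᵀπ ≥ 0`. -/

theorem bayesPred_nonneg {X : ℕ} {P : Matrix (Fin X) (Fin X) ℝ} {π : Fin X → ℝ}
    (hP : ∀ i j, 0 ≤ P i j) (hπ : ∀ i, 0 ≤ π i) (j : Fin X) : 0 ≤ bayesPred P π j :=
  Finset.sum_nonneg fun i _ => mul_nonneg (hP i j) (hπ i)

theorem bayesT_le_bayesT_of_mul_le_mul {X Y : ℕ} {B C : Matrix (Fin X) (Fin Y) ℝ}
    {P : Matrix (Fin X) (Fin X) ℝ} {π : Fin X → ℝ} {y y' : Fin Y} {k : Fin X}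
    (hp : ∀ j, 0 ≤ bayesPred P π j) (hB : 0 < obsMarg B P π y) (hC : 0 < obsMarg C P π y')
    (h : ∀ j, B j y * C k y' ≤ C j y' * B k y) :
    bayesT C P π y' k ≤ bayesT B P π y k := by
  unfold bayesT
  rw [div_le_div_iff₀ hC hB, obsMarg, obsMarg, Finset.mul_sum, Finset.mul_sum]
  refine Finset.sum_le_sum fun j _ => ?_
  set p := bayesPred P π
  calc C k y' * p k * (B j y * p j) = (B j y * C k y') * (p k * p j) := by ring
    _ ≤ (C j y' * B k y) * (p k * p j) :=
      mul_le_mul_of_nonneg_right (h j) (mul_nonneg (hp k) (hp j))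
    _ = B k y * p k * (C j y' * p j) := by ring

theorem boundary_bayes_update_inequalities_general
    (X Y : ℕ) [NeZero X] [NeZero Y]
    (P : Matrix (Fin X) (Fin X) ℝ) (hP : rowStochastic P)
    (Bu Bu' : Matrix (Fin X) (Fin Y) ℝ)
    (hA7 : BoundaryCond Bu Bu')
    (π : Fin X → ℝ) (hπ : inSimplex π) :
    (0 < obsMarg Bu P π 0 → 0 < obsMarg Bu' P π 0 →
      bayesT Bu' P π 0 (lastIdx X) ≤ bayesT Bu P π 0 (lastIdx X)) ∧
    (0 < obsMarg Bu P π (lastIdx Y) → 0 < obsMarg Bu' P π (lastIdx Y) →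
      bayesT Bu P π (lastIdx Y) (lastIdx X) ≤ bayesT Bu' P π (lastIdx Y) (lastIdx X)) := by
  have hp := bayesPred_nonneg hP.1 hπ.1
  exact ⟨fun hσ hσ' => bayesT_le_bayesT_of_mul_le_mul hp hσ hσ' fun j => (hA7 j).1,
    fun hσ hσ' => bayesT_le_bayesT_of_mul_le_mul hp hσ' hσ fun j => (hA7 j).2⟩

/-- Theorem 5, finite-observation form: under TP2 assumptions and the boundary condition A7
for the pair `(B(u), B(u+1))`, the last component of the Bayes update satisfies
`e_XᵀT(π,1,u+1) ≤ e_XᵀT(π,1,u)` at the smallest observation and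
`e_XᵀT(π,Y,u+1) ≥ e_XᵀT(π,Y,u)` at the largest observation. -/
theorem boundary_bayes_update_inequalities
    (X Y : ℕ) [NeZero X] [NeZero Y]
    (P : Matrix (Fin X) (Fin X) ℝ) (hP : rowStochastic P) (hPtp2 : TP2 P)
    (Bu Bu' : Matrix (Fin X) (Fin Y) ℝ)
    (hBu : rowStochastic Bu) (hBu' : rowStochastic Bu')
    (hBuTP2 : TP2 Bu) (hBu'TP2 : TP2 Bu')
    (hA7 : BoundaryCond Bu Bu')
    (π : Fin X → ℝ) (hπ : inSimplex π) :
    (0 < obsMarg Bu P π 0 → 0 < obsMarg Bu' P π 0 →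
      bayesT Bu' P π 0 (lastIdx X) ≤ bayesT Bu P π 0 (lastIdx X)) ∧
    (0 < obsMarg Bu P π (lastIdx Y) → 0 < obsMarg Bu' P π (lastIdx Y) →
      bayesT Bu P π (lastIdx Y) (lastIdx X) ≤ bayesT Bu' P π (lastIdx Y) (lastIdx X)) :=
  boundary_bayes_update_inequalities_general X Y P hP Bu Bu' hA7 π hπ
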